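/- Let f : V → ℝ≥0 and P : V → [0,1] with V a finite set, and A a finite set with |A| ≥ 1. Define HS(P) = (Σ_{v∈V} f(v)·P(v)) / (|A| + Σ_{v∈V} P(v)). Then HS(P) ≤ (Σ_{v∈V} f(v)) / |A|, and HS is monotone in the following sense: if P(v) increases only on vertices v where f(v) ≥ HS(P), then HS does not decrease. -/
import Mathlib


open Finset

theorem holoscope_objective_bound_and_monotone
    {V : Type*} [Fintype V] (f P P' : V → ℝ) (m : ℕ) (hm : 1 ≤ m)
    (hf : ∀ v, 0 ≤ f v) (hP : ∀ v, P v ∈ Set.Icc (0 : ℝ) 1)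
    (hP' : ∀ v, P' v ∈ Set.Icc (0 : ℝ) 1) :
    (∑ v, f v * P v) / ((m : ℝ) + ∑ v, P v) ≤ (∑ v, f v) / (m : ℝ) ∧
    ((∀ v, P v ≤ P' v) →
     (∀ v, f v < (∑ v, f v * P v) / ((m : ℝ) + ∑ v, P v) → P' v = P v) →
     (∑ v, f v * P v) / ((m : ℝ) + ∑ v, P v) ≤
       (∑ v, f v * P' v) / ((m : ℝ) + ∑ v, P' v)) := by
  have hm0 : (0 : ℝ) < m := by exact_mod_cast hm
  have hPsum : (0 : ℝ) ≤ ∑ v, P v :=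
    Finset.sum_nonneg fun v _ => (hP v).1
  have hP'sum : (0 : ℝ) ≤ ∑ v, P' v :=
    Finset.sum_nonneg fun v _ => (hP' v).1
  set S := ∑ v, f v * P v with hS
  set T := (m : ℝ) + ∑ v, P v with hT
  have hT0 : 0 < T := by positivity
  have hT'0 : 0 < (m : ℝ) + ∑ v, P' v := by positivity
  have hSnn : 0 ≤ S :=
    Finset.sum_nonneg fun v _ => mul_nonneg (hf v) (hP v).1
  constructor
  · calc S / T ≤ S / (m : ℝ) := by
          apply div_le_div_of_nonneg_left hSnn hm0
          simp [hT, hPsum]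
      _ ≤ (∑ v, f v) / (m : ℝ) := by
          gcongr
          exact Finset.sum_le_sum fun v _ =>
            mul_le_of_le_one_right (hf v) (hP v).2
  · intro hmono hfix
    rw [div_le_div_iff₀ hT0 hT'0]
    have key : ∀ v, S * (P' v - P v) ≤ f v * (P' v - P v) * T := by
      intro v
      by_cases h : P' v = P v
      · simp [h]
      · have hflt : S / T ≤ f v := by
          by_contra hc
          exact h (hfix v (lt_of_not_ge hc))
        have hd : 0 ≤ P' v - P v := sub_nonneg.2 (hmono v)
        have : S ≤ f v * T := (div_le_iff₀ hT0).1 hflt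
        calc S * (P' v - P v) ≤ f v * T * (P' v - P v) :=
              mul_le_mul_of_nonneg_right this hd
          _ = f v * (P' v - P v) * T := by ring
    have hsum : S * ((∑ v, P' v) - ∑ v, P v) ≤ ((∑ v, f v * P' v) - S) * T := by
      have := Finset.sum_le_sum fun v (_ : v ∈ Finset.univ) => key v
      calc S * ((∑ v, P' v) - ∑ v, P v)
          = ∑ v, S * (P' v - P v) := by
            rw [← Finset.sum_sub_distrib, Finset.mul_sum]
        _ ≤ ∑ v, f v * (P' v - P v) * T := this
        _ = ((∑ v, f v * P' v) - S) * T := by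
            rw [← Finset.sum_mul, hS, ← Finset.sum_sub_distrib]
            congr 1
            exact Finset.sum_congr rfl fun v _ => by ring
    nlinarith [hsum]
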